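/- arXiv:1907.09668 — 4 statements merged into one kernel-verified Lean document; each statement's English description precedes it below -/
import Mathlib

section
/- Under the setup of the previous statement (E[p_K] = (1 - r·x/(n-k⊥)) · ∏_{i=0}^{k⊥-1} (n-x-i)/(n-i), where k⊥ = ⌊n/η⌋, r = n/η - k⊥, and 1 ≤ x ≤ n, x + k⊥ + 1 ≤ n), it holds that E[p_K] ≤ e^{-x/η}. -/
/-!
Each factor `(N - X - i) / (N - i)` equals `1 - X / (N - i) ≤ 1 - X / N ≤ e^{-X / N}`, so the
product of the first `k` factors is at most `e^{-k X / N}`, and the interpolated last factor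
`1 - r X / (N - k)` is at most `e^{-r X / N}` in the same way. Since `k + r = N / η`, the
exponents add up to `-X / η`.
-/

open Finset Real

noncomputable section

def avoidFactor (N X t : ℝ) : ℝ := (N - X - t) / (N - t)

/-- The probability that a uniformly random `m`-subset of an `N`-set misses a fixed `X`-subset. -/
def avoidProb (N X : ℝ) (m : ℕ) : ℝ := ∏ i ∈ range m, avoidFactor N X i

variable {N X : ℝ}

lemma one_sub_mul_div_le_exp {r t : ℝ} (hX : 0 ≤ X) (hr : 0 ≤ r) (ht : 0 ≤ t) (htN : t < N) :
    1 - r * X / (N - t) ≤ exp (-(r * X / N)) :=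
  calc 1 - r * X / (N - t) ≤ 1 - r * X / N := by
        gcongr
        exact sub_le_self N ht
    _ ≤ exp (-(r * X / N)) := one_sub_le_exp_neg _

lemma avoidFactor_eq {t : ℝ} (htN : t < N) : avoidFactor N X t = 1 - X / (N - t) := by
  rw [avoidFactor, sub_right_comm, sub_div, div_self (sub_pos.2 htN).ne']

lemma avoidFactor_nonneg {t : ℝ} (hX : 0 ≤ X) (h : X + t ≤ N) : 0 ≤ avoidFactor N X t := by
  apply div_nonneg <;> linarith

lemma avoidFactor_le_exp {t : ℝ} (hX : 0 ≤ X) (ht : 0 ≤ t) (htN : t < N) :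
    avoidFactor N X t ≤ exp (-(X / N)) := by
  simpa [avoidFactor_eq htN] using one_sub_mul_div_le_exp hX zero_le_one ht htN

lemma add_lt_of_mem_range {i m : ℕ} (hi : i ∈ range m) (hm : X + m ≤ N) : X + i < N := by
  have : (i : ℝ) + 1 ≤ m := by exact_mod_cast mem_range.1 hi
  linarith

lemma avoidProb_nonneg {m : ℕ} (hX : 0 ≤ X) (hm : X + m ≤ N) : 0 ≤ avoidProb N X m :=
  prod_nonneg fun _ hi => avoidFactor_nonneg hX (add_lt_of_mem_range hi hm).le

lemma avoidProb_le_exp {m : ℕ} (hX : 0 ≤ X) (hm : X + m ≤ N) :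
    avoidProb N X m ≤ exp (-(m * X / N)) :=
  calc avoidProb N X m ≤ ∏ _i ∈ range m, exp (-(X / N)) :=
        prod_le_prod (fun _ hi => avoidFactor_nonneg hX (add_lt_of_mem_range hi hm).le)
          fun i hi => avoidFactor_le_exp hX i.cast_nonneg
            (by linarith [add_lt_of_mem_range hi hm])
    _ = exp (-(m * X / N)) := by rw [prod_const, card_range, ← exp_nat_mul]; ring_nf

lemma avoidProb_succ {m : ℕ} (hm : (m : ℝ) < N) :
    avoidProb N X (m + 1) = avoidProb N X m * (1 - X / (N - m)) := by
  rw [avoidProb, prod_range_succ, avoidFactor_eq hm, avoidProb]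

theorem interpolate_avoidProb_le_exp {r : ℝ} {k : ℕ} (hX : 0 ≤ X) (hr : 0 ≤ r)
    (hXk : X + k ≤ N) (hk : (k : ℝ) < N) :
    r * avoidProb N X (k + 1) + (1 - r) * avoidProb N X k ≤ exp (-((k + r) * X / N)) :=
  calc r * avoidProb N X (k + 1) + (1 - r) * avoidProb N X k
      = avoidProb N X k * (1 - r * X / (N - k)) := by rw [avoidProb_succ hk]; ring
    _ ≤ exp (-(k * X / N)) * exp (-(r * X / N)) :=
        (mul_le_mul_of_nonneg_left (one_sub_mul_div_le_exp hX hr k.cast_nonneg hk)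
          (avoidProb_nonneg hX hXk)).trans
          (mul_le_mul_of_nonneg_right (avoidProb_le_exp hX hXk) (exp_nonneg _))
    _ = exp (-((k + r) * X / N)) := by rw [← exp_add]; ring_nf

end

theorem expected_avoid_prob_le_general (n x : ℕ) (η : ℝ)
    (hη : 1 ≤ η)
    (hfit : x + ⌊(n : ℝ) / η⌋₊ + 1 ≤ n) :
    let k : ℕ := ⌊(n : ℝ) / η⌋₊
    let r : ℝ := (n : ℝ) / η - k
    let p : ℕ → ℝ := fun m => ∏ i ∈ Finset.range m, ((n : ℝ) - x - i) / ((n : ℝ) - i)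
    r * p (k + 1) + (1 - r) * p k ≤ Real.exp (-(x : ℝ) / η) := by
  intro k r p
  have hfit : (x : ℝ) + k + 1 ≤ n := by exact_mod_cast hfit
  have hx : (0 : ℝ) ≤ x := x.cast_nonneg
  have hr : 0 ≤ r := sub_nonneg.2 (Nat.floor_le (div_nonneg n.cast_nonneg (by linarith)))
  calc r * p (k + 1) + (1 - r) * p k ≤ exp (-((k + r) * x / n)) :=
        interpolate_avoidProb_le_exp hx hr (by linarith) (by linarith)
    _ = exp (-(x : ℝ) / η) := by
        have hn : (n : ℝ) ≠ 0 := by linarith [k.cast_nonneg (α := ℝ)]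
        simp only [r, add_sub_cancel]
        field_simp

theorem expected_avoid_prob_le (n x : ℕ) (η : ℝ) (hx1 : 1 ≤ x) (hxn : x ≤ n)
    (hη : 1 ≤ η) (hηn : η ≤ (n : ℝ))
    (hfit : x + ⌊(n : ℝ) / η⌋₊ + 1 ≤ n) :
    let k : ℕ := ⌊(n : ℝ) / η⌋₊
    let r : ℝ := (n : ℝ) / η - k
    let p : ℕ → ℝ := fun m => ∏ i ∈ Finset.range m, ((n : ℝ) - x - i) / ((n : ℝ) - i)
    r * p (k + 1) + (1 - r) * p k ≤ Real.exp (-(x : ℝ) / η) :=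
  expected_avoid_prob_le_general n x η hη hfit
end

section
/- Let n ≥ η ≥ 1 with k⊥ = ⌊n/η⌋ and r = n/η - k⊥. For an integer x with x ≥ η and x + k⊥ + 1 ≤ n, define the truncated-spread estimator expectation E[Γ̃] = η(1 - E[p_K]) where E[p_K] is as in the randomized rounding setup, and the truncated spread Γ = min(x, η) = η. Then (1 - 1/e)·Γ ≤ E[Γ̃] ≤ Γ. -/
/-!
Each factor `(n - x - i) / (n - i)` of `p_m` lies in `[0, 1 - x/n]`, and `1 - t ≤ e^{-t}`, so the
randomized mixture `r p_{k+1} + (1 - r) p_k` is at most `e^{-(k + r) x / n} = e^{-x/η} ≤ 1/e`.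
-/

open Finset Real

/-- The probability that `m` draws without replacement from `n` items miss `x` marked ones. -/
noncomputable def missProb (n x m : ℕ) : ℝ :=
  ∏ i ∈ range m, ((n : ℝ) - x - i) / ((n : ℝ) - i)

theorem div_sub_sub_le_one_sub_div {n x t : ℝ} (hx : 0 ≤ x) (ht : 0 ≤ t) (htn : t < n) :
    (n - x - t) / (n - t) ≤ 1 - x / n := by
  have hnt : 0 < n - t := sub_pos.2 htn
  have hxn : x / n ≤ x / (n - t) := div_le_div_of_nonneg_left hx hnt (sub_le_self n ht)
  calc (n - x - t) / (n - t) = 1 - x / (n - t) := by field_simp; ring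
    _ ≤ 1 - x / n := by linarith

theorem pow_mul_one_sub_mul_le_exp {a r : ℝ} (ha : 0 ≤ a) (k : ℕ) :
    a ^ k * (1 - r * (1 - a)) ≤ exp (-((k + r) * (1 - a))) := by
  have hpow : a ^ k ≤ exp (-(1 - a)) ^ k := by
    gcongr
    linarith [add_one_le_exp (-(1 - a))]
  have hlin : 1 - r * (1 - a) ≤ exp (-(r * (1 - a))) := by
    linarith [add_one_le_exp (-(r * (1 - a)))]
  calc a ^ k * (1 - r * (1 - a)) ≤ exp (-(1 - a)) ^ k * exp (-(r * (1 - a))) :=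
        mul_le_mul_of_nonneg hpow hlin (pow_nonneg ha k) (exp_nonneg _)
    _ = exp (-((k + r) * (1 - a))) := by rw [← exp_nat_mul, ← exp_add]; ring_nf

namespace missProb

variable {n x m : ℕ}

theorem succ :
    missProb n x (m + 1) = missProb n x m * (((n : ℝ) - x - m) / ((n : ℝ) - m)) :=
  prod_range_succ _ m

theorem factor_mem_Icc {i : ℕ} (hi : x + i < n) :
    0 ≤ ((n : ℝ) - x - i) / ((n : ℝ) - i) ∧
      ((n : ℝ) - x - i) / ((n : ℝ) - i) ≤ 1 - (x : ℝ) / n := by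
  have hi' : (x : ℝ) + i < n := by exact_mod_cast hi
  exact ⟨div_nonneg (by linarith) (by linarith),
    div_sub_sub_le_one_sub_div x.cast_nonneg i.cast_nonneg (by linarith [x.cast_nonneg (α := ℝ)])⟩

theorem nonneg (hm : x + m ≤ n) : 0 ≤ missProb n x m :=
  prod_nonneg fun i hi => (factor_mem_Icc (by have := mem_range.1 hi; omega)).1

theorem le_pow (hm : x + m ≤ n) : missProb n x m ≤ (1 - (x : ℝ) / n) ^ m := by
  calc missProb n x m ≤ ∏ _i ∈ range m, (1 - (x : ℝ) / n) :=
        prod_le_prod (fun i hi => (factor_mem_Icc (by have := mem_range.1 hi; omega)).1)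
          (fun i hi => (factor_mem_Icc (by have := mem_range.1 hi; omega)).2)
    _ = (1 - (x : ℝ) / n) ^ m := by rw [prod_const, card_range]

theorem mix_nonneg {r : ℝ} (hr0 : 0 ≤ r) (hr1 : r ≤ 1) (hm : x + m + 1 ≤ n) :
    0 ≤ r * missProb n x (m + 1) + (1 - r) * missProb n x m :=
  add_nonneg (mul_nonneg hr0 (nonneg (by omega))) (mul_nonneg (by linarith) (nonneg (by omega)))

/-- Interpolating between `p_m` and `p_{m+1}` with weight `r` costs only the fraction `r` of the
last factor, so the exponent becomes `(m + r) x / n`. -/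
theorem mix_le_exp {r : ℝ} (hr0 : 0 ≤ r) (hr1 : r ≤ 1) (hm : x + m + 1 ≤ n) :
    r * missProb n x (m + 1) + (1 - r) * missProb n x m ≤ exp (-((m + r) * x / n)) := by
  obtain ⟨hq0, hq⟩ := factor_mem_Icc (n := n) (x := x) (i := m) (by omega)
  set q := ((n : ℝ) - x - m) / ((n : ℝ) - m)
  set a := 1 - (x : ℝ) / n
  have hn : (0 : ℝ) < n := by exact_mod_cast (show 0 < n by omega)
  have ha : 0 ≤ a := by
    have : (x : ℝ) ≤ n := by exact_mod_cast (show x ≤ n by omega)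
    simp only [a, sub_nonneg, div_le_one hn, this]
  calc r * missProb n x (m + 1) + (1 - r) * missProb n x m
        = missProb n x m * (1 - r * (1 - q)) := by rw [succ]; ring
    _ ≤ a ^ m * (1 - r * (1 - a)) :=
        mul_le_mul (le_pow (by omega)) (by nlinarith) (by nlinarith) (pow_nonneg ha m)
    _ ≤ exp (-((m + r) * (1 - a))) := pow_mul_one_sub_mul_le_exp ha m
    _ = exp (-((m + r) * x / n)) := by simp only [a]; ring_nf

end missProb

theorem truncated_estimator_accuracy_general (n x : ℕ) (η : ℝ) (hη : 1 ≤ η)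
    (hxη : η ≤ (x : ℝ)) (hfit : x + ⌊(n : ℝ) / η⌋₊ + 1 ≤ n) :
    let k : ℕ := ⌊(n : ℝ) / η⌋₊
    let r : ℝ := (n : ℝ) / η - k
    let p : ℕ → ℝ := fun m => ∏ i ∈ Finset.range m, ((n : ℝ) - x - i) / ((n : ℝ) - i)
    let EΓ : ℝ := η * (1 - (r * p (k + 1) + (1 - r) * p k))
    (1 - 1 / Real.exp 1) * η ≤ EΓ ∧ EΓ ≤ η := by
  intro k r p EΓ
  show (1 - 1 / exp 1) * η ≤ η * (1 - (r * missProb n x (k + 1) + (1 - r) * missProb n x k)) ∧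
    η * (1 - (r * missProb n x (k + 1) + (1 - r) * missProb n x k)) ≤ η
  have hη0 : 0 < η := by linarith
  have hn : (0 : ℝ) < n := by exact_mod_cast (show 0 < n by omega)
  have hr0 : 0 ≤ r := sub_nonneg.2 (Nat.floor_le (by positivity))
  have hr1 : r ≤ 1 := by linarith [Nat.lt_floor_add_one ((n : ℝ) / η)]
  have hexponent : ((k : ℝ) + r) * x / n = x / η := by
    rw [show (k : ℝ) + r = n / η by ring]; field_simp
  have hmix : r * missProb n x (k + 1) + (1 - r) * missProb n x k ≤ 1 / exp 1 := by
    calc _ ≤ exp (-(((k : ℝ) + r) * x / n)) := missProb.mix_le_exp hr0 hr1 hfit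
      _ ≤ exp (-1) := by rw [hexponent, exp_le_exp, neg_le_neg_iff, one_le_div hη0]; exact hxη
      _ = 1 / exp 1 := by rw [exp_neg, one_div]
  have hmix0 := missProb.mix_nonneg hr0 hr1 hfit
  constructor <;> nlinarith

theorem truncated_estimator_accuracy (n x : ℕ) (η : ℝ) (hη : 1 ≤ η) (hηn : η ≤ (n : ℝ))
    (hxη : η ≤ (x : ℝ)) (hfit : x + ⌊(n : ℝ) / η⌋₊ + 1 ≤ n) :
    let k : ℕ := ⌊(n : ℝ) / η⌋₊
    let r : ℝ := (n : ℝ) / η - k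
    let p : ℕ → ℝ := fun m => ∏ i ∈ Finset.range m, ((n : ℝ) - x - i) / ((n : ℝ) - i)
    let EΓ : ℝ := η * (1 - (r * p (k + 1) + (1 - r) * p k))
    (1 - 1 / Real.exp 1) * η ≤ EΓ ∧ EΓ ≤ η :=
  truncated_estimator_accuracy_general n x η hη hxη hfit
end

section
/- Fix naturals n, k with k ≤ n, and define p(x) = ∏_{i=0}^{k-1} (n-x-i)/(n-i) as a real function of real x on [0, n-k+1]. Then the second derivative p''(x) = Σ_{i=0}^{k-1} Σ_{j≠i} p(x) / ((n-x-i)(n-x-j)) is nonnegative on [0, n-k], i.e., p is convex there. -/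
/-!
Each factor `x ↦ (n - i - x) / (n - i)` of `p` is affine, hence convex, and is nonnegative and
nonincreasing on `[0, n - k]`. Two nonnegative convex functions that are both nonincreasing
monovary, so their product is again convex (Chebyshev's sum inequality), and it is again
nonnegative and nonincreasing; induction over the factors gives convexity of `p`. The second
derivative formula is nonnegative term by term, since `p ≥ 0` and every `n - x - i > 0` there.
-/

open Finset Set

section Product

variable {ι 𝕜 : Type*} [Field 𝕜] [LinearOrder 𝕜] [IsStrictOrderedRing 𝕜] {s : Set 𝕜}
  {t : Finset ι} {f : ι → 𝕜 → 𝕜}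

theorem AntitoneOn.finset_prod_of_nonneg (hf : ∀ i ∈ t, AntitoneOn (f i) s)
    (hf₀ : ∀ i ∈ t, ∀ x ∈ s, 0 ≤ f i x) : AntitoneOn (fun x => ∏ i ∈ t, f i x) s :=
  fun _ ha _ hb hab =>
    prod_le_prod (fun i hi => hf₀ i hi _ hb) (fun i hi => hf i hi ha hb hab)

theorem ConvexOn.finset_prod_of_antitoneOn (hs : Convex 𝕜 s) (hf : ∀ i ∈ t, ConvexOn 𝕜 s (f i))
    (hf_anti : ∀ i ∈ t, AntitoneOn (f i) s) (hf₀ : ∀ i ∈ t, ∀ x ∈ s, 0 ≤ f i x) :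
    ConvexOn 𝕜 s (fun x => ∏ i ∈ t, f i x) := by
  classical
  induction t using Finset.induction_on with
  | empty => simpa using convexOn_const 1 hs
  | insert j t hj ih =>
    simp only [Finset.mem_insert, forall_eq_or_imp] at hf hf_anti hf₀
    simp only [prod_insert hj]
    exact hf.1.mul (ih hf.2 hf_anti.2 hf₀.2) hf₀.1
      (fun x hx => prod_nonneg fun i hi => hf₀.2 i hi x hx)
      (hf_anti.1.monovaryOn (AntitoneOn.finset_prod_of_nonneg hf_anti.2 hf₀.2))

end Product

section Factor

variable {𝕜 : Type*} [Field 𝕜] [LinearOrder 𝕜] [IsStrictOrderedRing 𝕜]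

theorem convexOn_sub_div_self (c : 𝕜) {s : Set 𝕜} (hs : Convex 𝕜 s) :
    ConvexOn 𝕜 s (fun x => (c - x) / c) := by
  refine ⟨hs, fun x _ y _ a b _ _ hab => le_of_eq ?_⟩
  have h : c - (a * x + b * y) = a * (c - x) + b * (c - y) := by linear_combination (-c) * hab
  simp only [smul_eq_mul, h, add_div, mul_div_assoc]

theorem antitoneOn_sub_div_self (c : 𝕜) : AntitoneOn (fun x => (c - x) / c) (Icc 0 c) :=
  fun _ ha _ _ hab => div_le_div_of_nonneg_right (by linarith) (ha.1.trans ha.2)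

theorem sub_div_self_nonneg {c x : 𝕜} (hx : x ∈ Icc 0 c) : 0 ≤ (c - x) / c :=
  div_nonneg (sub_nonneg.2 hx.2) (hx.1.trans hx.2)

end Factor

theorem avoid_prob_convex_general (n k : ℕ) :
    let p : ℝ → ℝ := fun x => ∏ i ∈ Finset.range k, ((n : ℝ) - x - i) / ((n : ℝ) - i)
    (∀ x ∈ Set.Icc (0 : ℝ) ((n : ℝ) - k),
        0 ≤ ∑ i ∈ Finset.range k, ∑ j ∈ (Finset.range k).erase i,
          p x / ((((n : ℝ) - x - i)) * (((n : ℝ) - x - j)))) ∧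
      ConvexOn ℝ (Set.Icc (0 : ℝ) ((n : ℝ) - k)) p := by
  intro p
  have hsub : ∀ i ∈ range k, Icc (0 : ℝ) (n - k) ⊆ Icc 0 (n - i) := by
    intro i hi
    have : (i : ℝ) ≤ k := by exact_mod_cast (mem_range.1 hi).le
    exact Icc_subset_Icc le_rfl (by linarith)
  have hp : p = fun x => ∏ i ∈ range k, ((n - i : ℝ) - x) / (n - i) := by
    simp only [p, sub_right_comm]
  have hfactor : ∀ i ∈ range k, ∀ x ∈ Icc (0 : ℝ) (n - k), 0 ≤ (n : ℝ) - x - i := by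
    intro i hi x hx
    linarith [(hsub i hi hx).2]
  have hp₀ : ∀ x ∈ Icc (0 : ℝ) (n - k), 0 ≤ p x := by
    rw [hp]
    exact fun x hx => prod_nonneg fun i hi => sub_div_self_nonneg (hsub i hi hx)
  refine ⟨fun x hx => sum_nonneg fun i hi => sum_nonneg fun j hj => ?_, ?_⟩
  · exact div_nonneg (hp₀ x hx)
      (mul_nonneg (hfactor i hi x hx) (hfactor j (mem_of_mem_erase hj) x hx))
  · rw [hp]
    exact ConvexOn.finset_prod_of_antitoneOn (convex_Icc _ _)
      (fun i _ => convexOn_sub_div_self _ (convex_Icc _ _))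
      (fun i hi => (antitoneOn_sub_div_self _).mono (hsub i hi))
      (fun i hi x hx => sub_div_self_nonneg (hsub i hi hx))

theorem avoid_prob_convex (n k : ℕ) (hk : k ≤ n) :
    let p : ℝ → ℝ := fun x => ∏ i ∈ Finset.range k, ((n : ℝ) - x - i) / ((n : ℝ) - i)
    (∀ x ∈ Set.Icc (0 : ℝ) ((n : ℝ) - k),
        0 ≤ ∑ i ∈ Finset.range k, ∑ j ∈ (Finset.range k).erase i,
          p x / ((((n : ℝ) - x - i)) * (((n : ℝ) - x - j)))) ∧
      ConvexOn ℝ (Set.Icc (0 : ℝ) ((n : ℝ) - k)) p :=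
  avoid_prob_convex_general n k
end

section
/- Let F : 2^V → ℝ be monotone submodular, V finite, b ≥ 1. The greedy algorithm that iteratively adds the element with maximum marginal gain for b steps produces a set S_b with F(S_b) ≥ (1 - (1 - 1/b)^b) · max_{|T| ≤ b} F(T). -/
theorem greedy_sub_aux {V : Type*} [Fintype V] [DecidableEq V] (F : Finset V → ℝ)
    (hsub : ∀ S T : Finset V, S ⊆ T → ∀ v : V,
      F (insert v T) - F T ≤ F (insert v S) - F S)
    (A B : Finset V) :
    F (A ∪ B) ≤ F A + ∑ v ∈ B, (F (insert v A) - F A) := by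
  induction B using Finset.induction_on with
  | empty => simp
  | @insert x B hx ih =>
    rw [Finset.sum_insert hx]
    have h1 : A ∪ insert x B = insert x (A ∪ B) := by
      ext y; simp [or_comm, or_left_comm]
    have h2 := hsub A (A ∪ B) Finset.subset_union_left x
    rw [h1]; linarith

theorem greedy_submodular_guarantee {V : Type*} [Fintype V] [DecidableEq V] (F : Finset V → ℝ)
    (hmono : ∀ S T : Finset V, S ⊆ T → F S ≤ F T)
    (hsub : ∀ S T : Finset V, S ⊆ T → ∀ v : V,
      F (insert v T) - F T ≤ F (insert v S) - F S)
    (hF0 : F ∅ = 0)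
    (b : ℕ) (hb : 1 ≤ b)
    (S : ℕ → Finset V) (hS0 : S 0 = ∅)
    (hgreedy : ∀ i < b, ∃ v : V, S (i + 1) = insert v (S i) ∧
      ∀ w : V, F (insert w (S i)) ≤ F (insert v (S i))) :
    ∀ T : Finset V, T.card ≤ b →
      (1 - (1 - 1 / (b : ℝ)) ^ b) * F T ≤ F (S b) := by
  intro T hT
  have hbR : (1 : ℝ) ≤ (b : ℝ) := by exact_mod_cast hb
  have hbpos : (0 : ℝ) < (b : ℝ) := by linarith
  have hc0 : (0 : ℝ) ≤ 1 - 1 / (b : ℝ) := by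
    have : 1 / (b : ℝ) ≤ 1 := by
      rw [div_le_one hbpos]; exact hbR
    linarith
  -- per-step contraction
  have step : ∀ i < b, F T - F (S (i + 1)) ≤ (1 - 1 / (b : ℝ)) * (F T - F (S i)) := by
    intro i hi
    obtain ⟨v, hv, hvmax⟩ := hgreedy i hi
    set g := F (S (i + 1)) - F (S i) with hg
    have hg0 : 0 ≤ g := by
      have := hvmax v
      have h2 : F (S i) ≤ F (insert v (S i)) := by
        exact hmono _ _ (Finset.subset_insert v (S i))
      rw [hg, hv]; linarith
    have key : F T - F (S i) ≤ (b : ℝ) * g := by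
      have h1 : F T ≤ F (S i ∪ T) := hmono _ _ Finset.subset_union_right
      have h2 := greedy_sub_aux F hsub (S i) T
      have h3 : ∑ w ∈ T, (F (insert w (S i)) - F (S i)) ≤ (T.card : ℝ) * g := by
        have hb' : ∀ w ∈ T, F (insert w (S i)) - F (S i) ≤ g := by
          intro w _
          have := hvmax w
          rw [hg, hv]; linarith
        have := Finset.sum_le_card_nsmul T (fun w => F (insert w (S i)) - F (S i)) g hb'
        simpa [nsmul_eq_mul] using this
      have h4 : (T.card : ℝ) * g ≤ (b : ℝ) * g := by
        apply mul_le_mul_of_nonneg_right _ hg0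
        exact_mod_cast hT
      linarith
    have : F T - F (S (i + 1)) = (F T - F (S i)) - g := by rw [hg]; ring
    rw [this]
    have : (F T - F (S i)) / (b : ℝ) ≤ g := by
      rw [div_le_iff₀ hbpos] at *
      linarith [key]
    have expand : (1 - 1 / (b : ℝ)) * (F T - F (S i))
        = (F T - F (S i)) - (F T - F (S i)) / (b : ℝ) := by
      field_simp
    rw [expand]; linarith
  -- induction
  have main : ∀ i ≤ b, F T - F (S i) ≤ (1 - 1 / (b : ℝ)) ^ i * F T := by
    intro i
    induction i with
    | zero => intro _; simp [hS0, hF0]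
    | succ n ih =>
      intro hn
      have hnb : n < b := hn
      have h1 := step n hnb
      have h2 := ih (le_of_lt hnb)
      calc F T - F (S (n + 1)) ≤ (1 - 1 / (b : ℝ)) * (F T - F (S n)) := h1
        _ ≤ (1 - 1 / (b : ℝ)) * ((1 - 1 / (b : ℝ)) ^ n * F T) :=
            mul_le_mul_of_nonneg_left h2 hc0
        _ = (1 - 1 / (b : ℝ)) ^ (n + 1) * F T := by ring
  have := main b le_rfl
  nlinarith [this]
end
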